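/- arXiv:1701.04151 — 2 statements merged into one kernel-verified Lean document; each statement's English description precedes it below -/
import Mathlib

section
/- Define for each integer n ≥ 1 the sup-convolution g^n(y,z) := sup_{u ∈ ℝ^d} ( g(y,u) − (n+λ)·‖u − z‖^α ). Then: (a) for all n and all (y,z), g(y,z) ≤ g^{n+1}(y,z) ≤ g^n(y,z), and |g^n(y,z) − g(y,0)| ≤ λ·(f + |y| + ‖z‖^α) (in particular the supremum is finite); (b) for all n, y, z₁, z₂, |g^n(y,z₁) − g^n(y,z₂)| ≤ (n+λ)·‖z₁ − z₂‖^α; (c) if in addition g is continuous on ℝ × ℝ^d with y ↦ g(y,z) continuous uniformly in z, then for any sequences y_n → y and z_n → z one has g^n(y_n, z_n) → g(y,z) as n → ∞. -/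
/-!
Since `0 < α ≤ 1`, the map `u ↦ ‖u‖ ^ α` is subadditive, so the growth `λ ‖u‖ ^ α` allowed by
(H4) is absorbed by the penalty `(n + λ) ‖u - z‖ ^ α`: the supremum is finite, bounded by
`g(y,0) + λ(f + |y| + ‖z‖ ^ α)`, and Hölder in `z` by the same subadditivity. For the limit, points
`u` near `z` are handled by joint continuity of `g`, while far from `z` the penalty grows like `n`
and eventually beats every bound.
-/

open Filter Topology

/-- The sup-convolution `g^n(y,z) := sup_{u ∈ ℝ^d} ( g(y,u) − (n+λ)·‖u − z‖^α )`. -/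
noncomputable def gsup (d : ℕ) (lam α : ℝ) (g : ℝ → EuclideanSpace ℝ (Fin d) → ℝ)
    (n : ℕ) (y : ℝ) (z : EuclideanSpace ℝ (Fin d)) : ℝ :=
  ⨆ u : EuclideanSpace ℝ (Fin d), (g y u - ((n : ℝ) + lam) * ‖u - z‖ ^ α)

theorem rpow_norm_le_rpow_norm_sub_add {E : Type*} [SeminormedAddGroup E] {α : ℝ}
    (hα0 : 0 ≤ α) (hα1 : α ≤ 1) (a b : E) : ‖a‖ ^ α ≤ ‖a - b‖ ^ α + ‖b‖ ^ α :=
  calc ‖a‖ ^ α ≤ (‖a - b‖ + ‖b‖) ^ α :=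
        Real.rpow_le_rpow (norm_nonneg _) (norm_le_norm_sub_add a b) hα0
    _ ≤ _ := Real.rpow_add_le_add_rpow (norm_nonneg _) (norm_nonneg _) hα0 hα1

noncomputable def supConv {E : Type*} [Norm E] [Sub E] (h : E → ℝ) (c α : ℝ) (z : E) : ℝ :=
  ⨆ u, h u - c * ‖u - z‖ ^ α

theorem gsup_eq_supConv (d : ℕ) (lam α : ℝ) (g : ℝ → EuclideanSpace ℝ (Fin d) → ℝ)
    (n : ℕ) (y : ℝ) (z : EuclideanSpace ℝ (Fin d)) :
    gsup d lam α g n y z = supConv (g y) (n + lam) α z := rfl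

namespace supConv

variable {E : Type*} [SeminormedAddCommGroup E] {h : E → ℝ} {A B c α : ℝ}

theorem sub_le_of_growth (hα0 : 0 ≤ α) (hα1 : α ≤ 1) (hB : 0 ≤ B)
    (hgrowth : ∀ u, h u ≤ A + B * ‖u‖ ^ α) (z u : E) :
    h u - c * ‖u - z‖ ^ α ≤ A + B * ‖z‖ ^ α - (c - B) * ‖u - z‖ ^ α := by
  have := mul_le_mul_of_nonneg_left (rpow_norm_le_rpow_norm_sub_add hα0 hα1 u z) hB
  linarith [hgrowth u]

theorem sub_le_of_growth_of_le (hα0 : 0 ≤ α) (hα1 : α ≤ 1) (hB : 0 ≤ B) (hBc : B ≤ c)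
    (hgrowth : ∀ u, h u ≤ A + B * ‖u‖ ^ α) (z u : E) :
    h u - c * ‖u - z‖ ^ α ≤ A + B * ‖z‖ ^ α := by
  have := mul_nonneg (sub_nonneg.2 hBc) (Real.rpow_nonneg (norm_nonneg (u - z)) α)
  linarith [sub_le_of_growth hα0 hα1 hB hgrowth z u (c := c)]

theorem bddAbove_of_growth (hα0 : 0 ≤ α) (hα1 : α ≤ 1) (hB : 0 ≤ B) (hBc : B ≤ c)
    (hgrowth : ∀ u, h u ≤ A + B * ‖u‖ ^ α) (z : E) :
    BddAbove (Set.range fun u => h u - c * ‖u - z‖ ^ α) :=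
  ⟨_, Set.forall_mem_range.2 (sub_le_of_growth_of_le hα0 hα1 hB hBc hgrowth z)⟩

theorem le_of_growth (hα0 : 0 ≤ α) (hα1 : α ≤ 1) (hB : 0 ≤ B) (hBc : B ≤ c)
    (hgrowth : ∀ u, h u ≤ A + B * ‖u‖ ^ α) (z : E) :
    supConv h c α z ≤ A + B * ‖z‖ ^ α :=
  ciSup_le (sub_le_of_growth_of_le hα0 hα1 hB hBc hgrowth z)

theorem sub_le_supConv {z : E} (hbdd : BddAbove (Set.range fun u => h u - c * ‖u - z‖ ^ α))
    (u : E) : h u - c * ‖u - z‖ ^ α ≤ supConv h c α z :=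
  le_ciSup hbdd u

theorem apply_le (hα : α ≠ 0) {z : E}
    (hbdd : BddAbove (Set.range fun u => h u - c * ‖u - z‖ ^ α)) : h z ≤ supConv h c α z := by
  simpa [Real.zero_rpow hα] using sub_le_supConv hbdd z

theorem anti {c' : ℝ} (hcc' : c ≤ c') {z : E}
    (hbdd : BddAbove (Set.range fun u => h u - c * ‖u - z‖ ^ α)) :
    supConv h c' α z ≤ supConv h c α z :=
  ciSup_le fun u => (sub_le_supConv hbdd u).trans' <| sub_le_sub_left
    (mul_le_mul_of_nonneg_right hcc' (Real.rpow_nonneg (norm_nonneg _) α)) _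

theorem sub_le (hα0 : 0 ≤ α) (hα1 : α ≤ 1) (hc : 0 ≤ c)
    (hbdd : ∀ z, BddAbove (Set.range fun u => h u - c * ‖u - z‖ ^ α)) (z₁ z₂ : E) :
    supConv h c α z₁ - supConv h c α z₂ ≤ c * ‖z₁ - z₂‖ ^ α := by
  rw [sub_le_iff_le_add]
  refine ciSup_le fun u => ?_
  have htri := mul_le_mul_of_nonneg_left
    (rpow_norm_le_rpow_norm_sub_add hα0 hα1 (u - z₂) (z₁ - z₂)) hc
  rw [sub_sub_sub_cancel_right, mul_add] at htri
  linarith [sub_le_supConv (hbdd z₂) u]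

theorem abs_sub_le (hα0 : 0 ≤ α) (hα1 : α ≤ 1) (hc : 0 ≤ c)
    (hbdd : ∀ z, BddAbove (Set.range fun u => h u - c * ‖u - z‖ ^ α)) (z₁ z₂ : E) :
    |supConv h c α z₁ - supConv h c α z₂| ≤ c * ‖z₁ - z₂‖ ^ α :=
  abs_sub_le_iff.2 ⟨sub_le hα0 hα1 hc hbdd z₁ z₂, norm_sub_rev z₁ z₂ ▸ sub_le hα0 hα1 hc hbdd z₂ z₁⟩

theorem le_of_near_of_far (hα0 : 0 ≤ α) (hα1 : α ≤ 1) (hB : 0 ≤ B) (hBc : B ≤ c)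
    (hgrowth : ∀ u, h u ≤ A + B * ‖u‖ ^ α) {z : E} {r a : ℝ} (hr : 0 ≤ r)
    (hnear : ∀ u, ‖u - z‖ < r → h u ≤ a) (hfar : A + B * ‖z‖ ^ α - (c - B) * r ^ α ≤ a) :
    supConv h c α z ≤ a := by
  refine ciSup_le fun u => ?_
  rcases lt_or_ge ‖u - z‖ r with hu | hu
  · have := mul_nonneg (hB.trans hBc) (Real.rpow_nonneg (norm_nonneg (u - z)) α)
    linarith [hnear u hu]
  · have := mul_le_mul_of_nonneg_left (Real.rpow_le_rpow hr hu hα0) (sub_nonneg.2 hBc)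
    linarith [sub_le_of_growth hα0 hα1 hB hgrowth z u (c := c)]

end supConv

theorem tendsto_supConv {ι Y E : Type*} [TopologicalSpace Y] [SeminormedAddCommGroup E]
    {l : Filter ι} {g : Y → E → ℝ} {A : Y → ℝ} {B α : ℝ} {c : ι → ℝ} {ys : ι → Y} {zs : ι → E}
    {y : Y} {z : E} (hα0 : 0 < α) (hα1 : α ≤ 1) (hB : 0 ≤ B)
    (hgrowth : ∀ y u, g y u ≤ A y + B * ‖u‖ ^ α)
    (hg : ContinuousAt (fun p : Y × E => g p.1 p.2) (y, z)) (hA : ContinuousAt A y)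
    (hc : Tendsto c l atTop) (hy : Tendsto ys l (𝓝 y)) (hz : Tendsto zs l (𝓝 z)) :
    Tendsto (fun i => supConv (g (ys i)) (c i) α (zs i)) l (𝓝 (g y z)) := by
  have hcB : ∀ᶠ i in l, B ≤ c i := hc.eventually_ge_atTop B
  refine tendsto_order.2 ⟨fun a ha => ?_, fun a ha => ?_⟩
  · have hgi : Tendsto (fun i => g (ys i) (zs i)) l (𝓝 (g y z)) :=
      hg.tendsto.comp (hy.prodMk_nhds hz)
    filter_upwards [hgi.eventually (lt_mem_nhds ha), hcB] with i hi hBi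
    exact hi.trans_le <| supConv.apply_le hα0.ne' <|
      supConv.bddAbove_of_growth hα0.le hα1 hB hBi (hgrowth _) _
  · obtain ⟨a', hza', ha'⟩ := exists_between ha
    have hnear : ∀ᶠ p in 𝓝 y ×ˢ 𝓝 z, g p.1 p.2 < a' := by
      rw [← nhds_prod_eq]
      exact hg.eventually (gt_mem_nhds hza')
    obtain ⟨pY, hpY, pE, hpE, hp⟩ := eventually_prod_iff.1 hnear
    obtain ⟨r, hr, hrE⟩ := Metric.eventually_nhds_iff.1 hpE
    -- Far from `zs i` the penalty `(c i - B) ‖u - zs i‖ ^ α` beats the growth of `g`.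
    have hfar : Tendsto (fun i => A (ys i) + B * ‖zs i‖ ^ α - (c i - B) * (r / 2) ^ α) l atBot := by
      have hbound : Tendsto (fun i => A (ys i) + B * ‖zs i‖ ^ α) l (𝓝 (A y + B * ‖z‖ ^ α)) :=
        (hA.tendsto.comp hy).add ((hz.norm.rpow_const (Or.inr hα0.le)).const_mul B)
      have hcB' : Tendsto (fun i => c i - B) l atTop := by
        simpa only [sub_eq_add_neg] using tendsto_atTop_add_const_right l (-B) hc
      have hpen : Tendsto (fun i => (c i - B) * (r / 2) ^ α) l atTop :=
        hcB'.atTop_mul_const (Real.rpow_pos_of_pos (half_pos hr) α)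
      simpa only [sub_eq_add_neg, Function.comp_def] using hbound.add_atBot (tendsto_neg_atTop_atBot.comp hpen)
    filter_upwards [hy.eventually hpY, hz.eventually (Metric.ball_mem_nhds z (half_pos hr)), hcB,
      hfar.eventually_le_atBot a'] with i hyi hzi hBi hfari
    refine (supConv.le_of_near_of_far hα0.le hα1 hB hBi (hgrowth _) (half_pos hr).le
      (fun u hu => (hp hyi (hrE ?_)).le) hfari).trans_lt ha'
    calc dist u z ≤ dist u (zs i) + dist (zs i) z := dist_triangle u (zs i) z
      _ < r / 2 + r / 2 := add_lt_add (by rwa [dist_eq_norm]) hzi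
      _ = r := add_halves r

theorem stmt_6_general (d : ℕ) (lam α f : ℝ) (hlam : 0 < lam)
    (hα : 0 < α ∧ α < 1)
    (g : ℝ → EuclideanSpace ℝ (Fin d) → ℝ)
    (H4 : ∀ (y : ℝ) (z : EuclideanSpace ℝ (Fin d)),
      |g y z - g y 0| ≤ lam * (f + |y| + ‖z‖ ^ α)) :
    (∀ n : ℕ, 1 ≤ n → ∀ (y : ℝ) (z : EuclideanSpace ℝ (Fin d)),
      BddAbove (Set.range fun u : EuclideanSpace ℝ (Fin d) =>
        g y u - ((n : ℝ) + lam) * ‖u - z‖ ^ α) ∧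
      g y z ≤ gsup d lam α g (n + 1) y z ∧
      gsup d lam α g (n + 1) y z ≤ gsup d lam α g n y z ∧
      |gsup d lam α g n y z - g y 0| ≤ lam * (f + |y| + ‖z‖ ^ α)) ∧
    (∀ n : ℕ, 1 ≤ n → ∀ (y : ℝ) (z₁ z₂ : EuclideanSpace ℝ (Fin d)),
      |gsup d lam α g n y z₁ - gsup d lam α g n y z₂| ≤ ((n : ℝ) + lam) * ‖z₁ - z₂‖ ^ α) ∧
    (Continuous (fun p : ℝ × EuclideanSpace ℝ (Fin d) => g p.1 p.2) →
      (∀ (y₀ : ℝ) (ε : ℝ), 0 < ε → ∃ δ > 0, ∀ y : ℝ, |y - y₀| < δ →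
        ∀ z : EuclideanSpace ℝ (Fin d), |g y z - g y₀ z| ≤ ε) →
      ∀ (yseq : ℕ → ℝ) (zseq : ℕ → EuclideanSpace ℝ (Fin d))
        (y : ℝ) (z : EuclideanSpace ℝ (Fin d)),
        Tendsto yseq atTop (𝓝 y) → Tendsto zseq atTop (𝓝 z) →
        Tendsto (fun n : ℕ => gsup d lam α g n (yseq n) (zseq n)) atTop (𝓝 (g y z))) := by
  obtain ⟨hα0, hα1⟩ := hα
  have hgrowth : ∀ y u, g y u ≤ (g y 0 + lam * (f + |y|)) + lam * ‖u‖ ^ α := fun y u => by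
    linarith [(abs_le.1 (H4 y u)).2]
  have hbdd : ∀ (n : ℕ) y z, BddAbove (Set.range fun u : EuclideanSpace ℝ (Fin d) =>
      g y u - ((n : ℝ) + lam) * ‖u - z‖ ^ α) := fun n y =>
    supConv.bddAbove_of_growth hα0.le hα1.le hlam.le (le_add_of_nonneg_left n.cast_nonneg)
      (hgrowth y)
  refine ⟨fun n _ y z => ⟨hbdd n y z, ?_, ?_, ?_⟩, fun n _ y =>
    supConv.abs_sub_le hα0.le hα1.le (by positivity) (hbdd n y), fun hg _ ys zs y z hy hz => ?_⟩
  · exact supConv.apply_le hα0.ne' (hbdd (n + 1) y z)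
  · exact supConv.anti (by push_cast; linarith) (hbdd n y z)
  · have hupper := supConv.le_of_growth hα0.le hα1.le hlam.le
      (le_add_of_nonneg_left n.cast_nonneg) (hgrowth y) z
    have hlower := supConv.apply_le hα0.ne' (hbdd n y z)
    rw [gsup_eq_supConv, abs_le]
    constructor <;> linarith [(abs_le.1 (H4 y z)).1]
  · have hg0 : Continuous fun y => g y 0 := hg.comp (continuous_id.prodMk continuous_const)
    exact tendsto_supConv hα0 hα1.le hlam.le hgrowth hg.continuousAt (by fun_prop)
      (tendsto_atTop_add_const_right atTop lam tendsto_natCast_atTop_atTop) hy hz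

/-- properties of the sup-convolution `g^n`:
(a) `g ≤ g^{n+1} ≤ g^n`, `|g^n(y,z) − g(y,0)| ≤ λ(f+|y|+‖z‖^α)` and the sup is finite;
(b) `|g^n(y,z₁) − g^n(y,z₂)| ≤ (n+λ)‖z₁−z₂‖^α`;
(c) under (H1), `g^n(y_n,z_n) → g(y,z)` whenever `y_n → y` and `z_n → z`. -/
theorem stmt_6 (d : ℕ) (hd : 1 ≤ d) (lam α f : ℝ) (hlam : 0 < lam)
    (hα : 0 < α ∧ α < 1) (hf : 0 ≤ f)
    (g : ℝ → EuclideanSpace ℝ (Fin d) → ℝ)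
    (H4 : ∀ (y : ℝ) (z : EuclideanSpace ℝ (Fin d)),
      |g y z - g y 0| ≤ lam * (f + |y| + ‖z‖ ^ α)) :
    (∀ n : ℕ, 1 ≤ n → ∀ (y : ℝ) (z : EuclideanSpace ℝ (Fin d)),
      BddAbove (Set.range fun u : EuclideanSpace ℝ (Fin d) =>
        g y u - ((n : ℝ) + lam) * ‖u - z‖ ^ α) ∧
      g y z ≤ gsup d lam α g (n + 1) y z ∧
      gsup d lam α g (n + 1) y z ≤ gsup d lam α g n y z ∧
      |gsup d lam α g n y z - g y 0| ≤ lam * (f + |y| + ‖z‖ ^ α)) ∧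
    (∀ n : ℕ, 1 ≤ n → ∀ (y : ℝ) (z₁ z₂ : EuclideanSpace ℝ (Fin d)),
      |gsup d lam α g n y z₁ - gsup d lam α g n y z₂| ≤ ((n : ℝ) + lam) * ‖z₁ - z₂‖ ^ α) ∧
    (Continuous (fun p : ℝ × EuclideanSpace ℝ (Fin d) => g p.1 p.2) →
      (∀ (y₀ : ℝ) (ε : ℝ), 0 < ε → ∃ δ > 0, ∀ y : ℝ, |y - y₀| < δ →
        ∀ z : EuclideanSpace ℝ (Fin d), |g y z - g y₀ z| ≤ ε) →
      ∀ (yseq : ℕ → ℝ) (zseq : ℕ → EuclideanSpace ℝ (Fin d))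
        (y : ℝ) (z : EuclideanSpace ℝ (Fin d)),
        Tendsto yseq atTop (𝓝 y) → Tendsto zseq atTop (𝓝 z) →
        Tendsto (fun n : ℕ => gsup d lam α g n (yseq n) (zseq n)) atTop (𝓝 (g y z))) :=
  stmt_6_general d lam α f hlam hα g H4
end

section
/- Define for each integer n ≥ 1 the sup-convolution g^n(y,z) := sup over all pairs (u,v) with u ∈ ℚ and v ∈ ℚ^d of ( g(u,v) − n·C·(|y − u| + ‖z − v‖^α) ). Then: (a) for all n and (y,z), g^{n+1}(y,z) ≤ g^n(y,z) and |g^n(y,z)| ≤ f + C·(|y| + ‖z‖^α); (b) |g^n(y₁,z₁) − g^n(y₂,z₂)| ≤ n·C·(|y₁ − y₂| + ‖z₁ − z₂‖^α) for all y₁, y₂, z₁, z₂; (c) if g satisfies condition (H1b), then g(y,z) ≤ g^n(y,z) for all n and (y,z), and for any sequences y_n → y₀ with y_n ≥ y₀ for all n and z_n → z₀, one has g^n(y_n, z_n) → g(y₀, z₀) as n → ∞. -/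
open Filter Topology

/-- The embedding of a rational vector into `ℝ^d` (with the Euclidean norm). -/
noncomputable def qcast (d : ℕ) (v : Fin d → ℚ) : EuclideanSpace ℝ (Fin d) :=
  (WithLp.equiv 2 (Fin d → ℝ)).symm fun i => (v i : ℝ)

/-- The rational sup-convolution
`g^n(y,z) := sup_{(u,v) ∈ ℚ × ℚ^d} ( g(u,v) − n·C·(|y − u| + ‖z − v‖^α) )`. -/
noncomputable def gqsup (d : ℕ) (C α : ℝ) (g : ℝ → EuclideanSpace ℝ (Fin d) → ℝ)
    (n : ℕ) (y : ℝ) (z : EuclideanSpace ℝ (Fin d)) : ℝ :=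
  ⨆ p : ℚ × (Fin d → ℚ),
    (g (p.1 : ℝ) (qcast d p.2) - (n : ℝ) * C * (|y - (p.1 : ℝ)| + ‖z - qcast d p.2‖ ^ α))

/- ---------- auxiliary lemmas ---------- -/

lemma aux_rpow_add_le {a b p : ℝ} (ha : 0 ≤ a) (hb : 0 ≤ b) (hp : 0 ≤ p) (hp1 : p ≤ 1) :
    (a + b) ^ p ≤ a ^ p + b ^ p := by
  rw [← Real.coe_toNNReal a ha, ← Real.coe_toNNReal b hb, ← NNReal.coe_add,
    ← NNReal.coe_rpow, ← NNReal.coe_rpow, ← NNReal.coe_rpow, ← NNReal.coe_add,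
    NNReal.coe_le_coe]
  exact NNReal.rpow_add_le_add_rpow _ _ hp hp1

lemma aux_rpow_tri {E : Type*} [NormedAddCommGroup E] {α : ℝ} (hα : 0 ≤ α) (hα1 : α ≤ 1)
    (a b : E) : ‖a‖ ^ α ≤ ‖b‖ ^ α + ‖a - b‖ ^ α := by
  have h1 : ‖a‖ ≤ ‖b‖ + ‖a - b‖ := by
    have := norm_sub_le_norm_sub_add_norm_sub a b 0
    simp only [sub_zero] at this
    linarith
  calc ‖a‖ ^ α ≤ (‖b‖ + ‖a - b‖) ^ α :=
        Real.rpow_le_rpow (norm_nonneg a) h1 hα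
    _ ≤ ‖b‖ ^ α + ‖a - b‖ ^ α := aux_rpow_add_le (norm_nonneg b) (norm_nonneg _) hα hα1

lemma qcast_dense (d : ℕ) : DenseRange (qcast d) := by
  have h1 : DenseRange (Pi.map (fun _ : Fin d => (Rat.cast : ℚ → ℝ))) := by
    rw [DenseRange, Set.range_piMap]
    exact dense_pi Set.univ fun i _ => Rat.denseRange_cast
  let h2 := (PiLp.continuousLinearEquiv 2 ℝ (fun _ : Fin d => ℝ)).symm.toHomeomorph
  have he : qcast d = h2 ∘ (Pi.map (fun _ : Fin d => (Rat.cast : ℚ → ℝ))) := by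
    funext v; simp [qcast, Pi.map, PiLp.continuousLinearEquiv_symm_apply]; rfl
  rw [he]
  exact (h2.surjective.denseRange).comp h1 h2.continuous

lemma qcast_approx (d : ℕ) (z : EuclideanSpace ℝ (Fin d)) {δ : ℝ} (hδ : 0 < δ) :
    ∃ v : Fin d → ℚ, ‖z - qcast d v‖ < δ := by
  obtain ⟨v, h⟩ := Metric.denseRange_iff.1 (qcast_dense d) z δ hδ
  rw [dist_comm, dist_eq_norm] at h
  exact ⟨v, by rwa [norm_sub_rev] at h⟩

/-- joint rational approximation, from the right in the first coordinate,
with control of both the norm and its `α`-power. -/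
lemma qapprox (d : ℕ) {α : ℝ} (hα : 0 < α) (hα1 : α < 1)
    (y : ℝ) (z : EuclideanSpace ℝ (Fin d)) {ε : ℝ} (hε : 0 < ε) :
    ∃ (u : ℚ) (v : Fin d → ℚ), y ≤ (u : ℝ) ∧ |y - (u : ℝ)| < ε ∧
      ‖z - qcast d v‖ < ε ∧ ‖z - qcast d v‖ ^ α < ε := by
  obtain ⟨u, hu1, hu2⟩ := exists_rat_btwn (lt_add_of_pos_right y hε)
  set e := min ε 1 with he
  have he0 : 0 < e := lt_min hε one_pos
  have he1 : e ≤ 1 := min_le_right _ _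
  set δ := min ε (e ^ (1/α)) with hδdef
  have hδ0 : 0 < δ := lt_min hε (Real.rpow_pos_of_pos he0 _)
  obtain ⟨v, hv⟩ := qcast_approx d z hδ0
  refine ⟨u, v, hu1.le, ?_, hv.trans_le (min_le_left _ _), ?_⟩
  · rw [abs_sub_comm, abs_of_nonneg (by linarith)]; linarith
  · have h1 : ‖z - qcast d v‖ ^ α < δ ^ α :=
      Real.rpow_lt_rpow (norm_nonneg _) hv hα
    have h2 : δ ^ α ≤ (e ^ (1/α)) ^ α :=
      Real.rpow_le_rpow hδ0.le (min_le_right _ _) hα.le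
    have h3 : (e ^ (1/α)) ^ α = e := by
      rw [← Real.rpow_mul he0.le, one_div_mul_cancel hα.ne', Real.rpow_one]
    calc ‖z - qcast d v‖ ^ α < δ ^ α := h1
      _ ≤ e := by rw [← h3]; exact h2
      _ ≤ ε := min_le_left _ _

section main

variable {d : ℕ} {C α f : ℝ} {g : ℝ → EuclideanSpace ℝ (Fin d) → ℝ}

/-- growth bound for `g` at a shifted point. -/
lemma g_ub (hC : 0 < C) (hα : 0 < α) (hα1 : α < 1) (hf : 0 ≤ f)
    (H5 : ∀ (y : ℝ) (z : EuclideanSpace ℝ (Fin d)), |g y z| ≤ f + C * (|y| + ‖z‖ ^ α))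
    (y u : ℝ) (z w : EuclideanSpace ℝ (Fin d)) :
    g u w ≤ f + C * (|y| + ‖z‖ ^ α) + C * (|y - u| + ‖z - w‖ ^ α) := by
  have h1 : g u w ≤ f + C * (|u| + ‖w‖ ^ α) := (abs_le.1 (H5 u w)).2
  have h2 : |u| ≤ |y| + |y - u| := by
    have := abs_sub_abs_le_abs_sub u y
    rw [abs_sub_comm] at this; linarith
  have h3 : ‖w‖ ^ α ≤ ‖z‖ ^ α + ‖z - w‖ ^ α := by
    have := aux_rpow_tri hα.le hα1.le w z
    rwa [norm_sub_rev] at this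
  nlinarith [mul_le_mul_of_nonneg_left (add_le_add h2 h3) hC.le]

/-- upper bound on each term of the sup-convolution. -/
lemma term_ub (hC : 0 < C) (hα : 0 < α) (hα1 : α < 1) (hf : 0 ≤ f)
    (H5 : ∀ (y : ℝ) (z : EuclideanSpace ℝ (Fin d)), |g y z| ≤ f + C * (|y| + ‖z‖ ^ α))
    {n : ℕ} (hn : 1 ≤ n) (y : ℝ) (z : EuclideanSpace ℝ (Fin d)) (p : ℚ × (Fin d → ℚ)) :
    g (p.1 : ℝ) (qcast d p.2) - (n : ℝ) * C * (|y - (p.1 : ℝ)| + ‖z - qcast d p.2‖ ^ α) ≤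
      f + C * (|y| + ‖z‖ ^ α) := by
  have h1 := g_ub hC hα hα1 hf H5 y (p.1 : ℝ) z (qcast d p.2)
  have hD : 0 ≤ |y - (p.1 : ℝ)| + ‖z - qcast d p.2‖ ^ α := by positivity
  have hn' : (1 : ℝ) ≤ (n : ℝ) := by exact_mod_cast hn
  nlinarith [mul_nonneg (mul_nonneg (sub_nonneg.2 hn') hC.le) hD]

lemma gq_bdd (hC : 0 < C) (hα : 0 < α) (hα1 : α < 1) (hf : 0 ≤ f)
    (H5 : ∀ (y : ℝ) (z : EuclideanSpace ℝ (Fin d)), |g y z| ≤ f + C * (|y| + ‖z‖ ^ α))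
    {n : ℕ} (hn : 1 ≤ n) (y : ℝ) (z : EuclideanSpace ℝ (Fin d)) :
    BddAbove (Set.range fun p : ℚ × (Fin d → ℚ) =>
      g (p.1 : ℝ) (qcast d p.2) - (n : ℝ) * C * (|y - (p.1 : ℝ)| + ‖z - qcast d p.2‖ ^ α)) :=
  ⟨f + C * (|y| + ‖z‖ ^ α), Set.forall_mem_range.2 fun p => term_ub hC hα hα1 hf H5 hn y z p⟩

end main

set_option maxHeartbeats 2000000 in
/-- properties of the rational sup-convolution `g^n`:
(a) `g^{n+1} ≤ g^n` and `|g^n(y,z)| ≤ f + C·(|y| + ‖z‖^α)`;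
(b) `|g^n(y₁,z₁) − g^n(y₂,z₂)| ≤ n·C·(|y₁ − y₂| + ‖z₁ − z₂‖^α)`;
(c) under (H1b): `g ≤ g^n`, and `g^n(y_n,z_n) → g(y₀,z₀)` whenever `y_n → y₀`
with `y_n ≥ y₀` for all `n`, and `z_n → z₀`. -/
theorem stmt_11 (d : ℕ) (hd : 1 ≤ d) (C α f : ℝ) (hC : 0 < C)
    (hα : 0 < α ∧ α < 1) (hf : 0 ≤ f)
    (g : ℝ → EuclideanSpace ℝ (Fin d) → ℝ)
    (H5 : ∀ (y : ℝ) (z : EuclideanSpace ℝ (Fin d)),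
      |g y z| ≤ f + C * (|y| + ‖z‖ ^ α)) :
    (∀ n : ℕ, 1 ≤ n → ∀ (y : ℝ) (z : EuclideanSpace ℝ (Fin d)),
      gqsup d C α g (n + 1) y z ≤ gqsup d C α g n y z ∧
      |gqsup d C α g n y z| ≤ f + C * (|y| + ‖z‖ ^ α)) ∧
    (∀ n : ℕ, 1 ≤ n → ∀ (y₁ y₂ : ℝ) (z₁ z₂ : EuclideanSpace ℝ (Fin d)),
      |gqsup d C α g n y₁ z₁ - gqsup d C α g n y₂ z₂| ≤
        (n : ℝ) * C * (|y₁ - y₂| + ‖z₁ - z₂‖ ^ α)) ∧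
    ((∀ (y₀ : ℝ) (z₀ : EuclideanSpace ℝ (Fin d)),
        Tendsto (fun p : ℝ × EuclideanSpace ℝ (Fin d) => g p.1 p.2)
          (𝓝[{p : ℝ × EuclideanSpace ℝ (Fin d) | y₀ ≤ p.1}] (y₀, z₀)) (𝓝 (g y₀ z₀))) →
      (∀ (y₀ : ℝ) (z₀ : EuclideanSpace ℝ (Fin d)),
        Filter.limsup (fun p : ℝ × EuclideanSpace ℝ (Fin d) => g p.1 p.2)
          (𝓝[{p : ℝ × EuclideanSpace ℝ (Fin d) | p.1 ≤ y₀}] (y₀, z₀)) ≤ g y₀ z₀) →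
      (∀ n : ℕ, 1 ≤ n → ∀ (y : ℝ) (z : EuclideanSpace ℝ (Fin d)),
        g y z ≤ gqsup d C α g n y z) ∧
      (∀ (yseq : ℕ → ℝ) (zseq : ℕ → EuclideanSpace ℝ (Fin d))
        (y₀ : ℝ) (z₀ : EuclideanSpace ℝ (Fin d)),
        (∀ n, y₀ ≤ yseq n) → Tendsto yseq atTop (𝓝 y₀) → Tendsto zseq atTop (𝓝 z₀) →
        Tendsto (fun n : ℕ => gqsup d C α g n (yseq n) (zseq n)) atTop (𝓝 (g y₀ z₀)))) := by
  obtain ⟨hα0, hα1⟩ := hα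
  -- part (a)
  have parta : ∀ n : ℕ, 1 ≤ n → ∀ (y : ℝ) (z : EuclideanSpace ℝ (Fin d)),
      gqsup d C α g (n + 1) y z ≤ gqsup d C α g n y z ∧
      |gqsup d C α g n y z| ≤ f + C * (|y| + ‖z‖ ^ α) := by
    intro n hn y z
    have hbdd := gq_bdd hC hα0 hα1 hf H5 hn y z
    constructor
    · simp only [gqsup]
      refine ciSup_le fun p => ?_
      refine le_trans ?_ (le_ciSup hbdd p)
      have hD : 0 ≤ |y - (p.1 : ℝ)| + ‖z - qcast d p.2‖ ^ α := by positivity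
      have : ((n : ℝ)) * C * (|y - (p.1 : ℝ)| + ‖z - qcast d p.2‖ ^ α) ≤
          ((n + 1 : ℕ) : ℝ) * C * (|y - (p.1 : ℝ)| + ‖z - qcast d p.2‖ ^ α) := by
        push_cast
        nlinarith [mul_nonneg hC.le hD]
      linarith
    · rw [abs_le]
      constructor
      · -- lower bound
        rw [neg_le]
        have key : ∀ ε > 0, -(gqsup d C α g n y z) ≤ f + C * (|y| + ‖z‖ ^ α) + ε := by
          intro ε hε
          set e := ε / (2 * (C + (n : ℝ) * C) + 1) with hedef
          have hnC : (0 : ℝ) ≤ (n : ℝ) * C := by positivity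
          have he : 0 < e := by positivity
          obtain ⟨u, v, _, hu, _, hv⟩ := qapprox d hα0 hα1 y z he
          have hterm : g (u : ℝ) (qcast d v) -
              (n : ℝ) * C * (|y - (u : ℝ)| + ‖z - qcast d v‖ ^ α) ≤
              gqsup d C α g n y z := le_ciSup hbdd (u, v)
          have hg : -(f + C * (|(u : ℝ)| + ‖qcast d v‖ ^ α)) ≤ g (u : ℝ) (qcast d v) :=
            (abs_le.1 (H5 _ _)).1
          have h2 : |(u : ℝ)| ≤ |y| + |y - (u : ℝ)| := by
            have := abs_sub_abs_le_abs_sub (u : ℝ) y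
            rw [abs_sub_comm] at this; linarith
          have h3 : ‖qcast d v‖ ^ α ≤ ‖z‖ ^ α + ‖z - qcast d v‖ ^ α := by
            have := aux_rpow_tri hα0.le hα1.le (qcast d v) z
            rwa [norm_sub_rev] at this
          have hee : 2 * (C + (n : ℝ) * C) * e ≤ ε := by
            rw [hedef]
            have h4 : (2 * (C + (n : ℝ) * C)) / (2 * (C + (n : ℝ) * C) + 1) ≤ 1 := by
              rw [div_le_one (by positivity)]; linarith
            have heq : 2 * (C + (n : ℝ) * C) * (ε / (2 * (C + (n : ℝ) * C) + 1)) =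
                (2 * (C + (n : ℝ) * C)) / (2 * (C + (n : ℝ) * C) + 1) * ε := by ring
            rw [heq]
            exact mul_le_of_le_one_left hε.le h4
          have habs : 0 ≤ |y - (u:ℝ)| := abs_nonneg _
          have hnn : 0 ≤ ‖z - qcast d v‖ ^ α := by positivity
          nlinarith [mul_le_mul_of_nonneg_left (add_le_add hu.le hv.le) hnC,
            mul_le_mul_of_nonneg_left (add_le_add h2 h3) hC.le]
        by_contra hcon
        push_neg at hcon
        obtain ⟨ε, hε, hlt⟩ : ∃ ε > 0, f + C * (|y| + ‖z‖ ^ α) + ε < -(gqsup d C α g n y z) :=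
          ⟨(-(gqsup d C α g n y z) - (f + C * (|y| + ‖z‖ ^ α))) / 2, by linarith, by linarith⟩
        exact absurd (key ε hε) (by linarith)
      · simp only [gqsup]
        exact ciSup_le fun p => term_ub hC hα0 hα1 hf H5 hn y z p
  refine ⟨parta, ?_, ?_⟩
  · -- part (b)
    have key : ∀ n : ℕ, 1 ≤ n → ∀ (y₁ y₂ : ℝ) (z₁ z₂ : EuclideanSpace ℝ (Fin d)),
        gqsup d C α g n y₁ z₁ ≤ gqsup d C α g n y₂ z₂ +
          (n : ℝ) * C * (|y₁ - y₂| + ‖z₁ - z₂‖ ^ α) := by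
      intro n hn y₁ y₂ z₁ z₂
      rw [show gqsup d C α g n y₁ z₁ = _ from rfl]
      refine ciSup_le fun p => ?_
      have hterm : g (p.1 : ℝ) (qcast d p.2) -
          (n : ℝ) * C * (|y₂ - (p.1 : ℝ)| + ‖z₂ - qcast d p.2‖ ^ α) ≤
          gqsup d C α g n y₂ z₂ := le_ciSup (gq_bdd hC hα0 hα1 hf H5 hn y₂ z₂) p
      have h2 : |y₂ - (p.1 : ℝ)| ≤ |y₁ - (p.1 : ℝ)| + |y₁ - y₂| := by
        have := abs_sub_abs_le_abs_sub (y₂ - (p.1 : ℝ)) (y₁ - (p.1 : ℝ))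
        have heq : (y₂ - (p.1 : ℝ)) - (y₁ - (p.1 : ℝ)) = y₂ - y₁ := by ring
        rw [heq, abs_sub_comm y₂ y₁] at this
        linarith
      have h3 : ‖z₂ - qcast d p.2‖ ^ α ≤ ‖z₁ - qcast d p.2‖ ^ α + ‖z₁ - z₂‖ ^ α := by
        have := aux_rpow_tri hα0.le hα1.le (z₂ - qcast d p.2) (z₁ - qcast d p.2)
        have heq : (z₂ - qcast d p.2) - (z₁ - qcast d p.2) = z₂ - z₁ := by abel
        rw [heq, norm_sub_rev z₂ z₁] at this
        linarith
      have hnC : (0 : ℝ) ≤ (n : ℝ) * C := by positivity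
      nlinarith [mul_le_mul_of_nonneg_left (add_le_add h2 h3) hnC]
    intro n hn y₁ y₂ z₁ z₂
    rw [abs_sub_le_iff]
    constructor
    · linarith [key n hn y₁ y₂ z₁ z₂]
    · have := key n hn y₂ y₁ z₂ z₁
      rw [abs_sub_comm y₂ y₁, norm_sub_rev z₂ z₁] at this
      linarith
  · -- part (c)
    intro H1 H2
    have hc1 : ∀ n : ℕ, 1 ≤ n → ∀ (y : ℝ) (z : EuclideanSpace ℝ (Fin d)),
        g y z ≤ gqsup d C α g n y z := by
      intro n hn y z
      refine le_of_forall_pos_le_add fun ε hε => ?_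
      obtain ⟨δ, hδ0, hδ⟩ := Metric.tendsto_nhdsWithin_nhds.1 (H1 y z) (ε/2) (by linarith)
      set e := min δ (ε / (4 * ((n : ℝ) * C) + 1)) with hedef
      have he : 0 < e := lt_min hδ0 (by positivity)
      obtain ⟨u, v, huy, hu, hv, hvα⟩ := qapprox d hα0 hα1 y z he
      have hmem : ((u : ℝ), qcast d v) ∈ {p : ℝ × EuclideanSpace ℝ (Fin d) | y ≤ p.1} := huy
      have hdist : dist ((u : ℝ), qcast d v) (y, z) < δ := by
        rw [Prod.dist_eq, max_lt_iff]
        constructor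
        · rw [Real.dist_eq, abs_sub_comm]
          exact hu.trans_le (min_le_left _ _)
        · rw [dist_eq_norm, norm_sub_rev]
          exact hv.trans_le (min_le_left _ _)
      have hgc : |g (u : ℝ) (qcast d v) - g y z| < ε / 2 := by
        have := hδ hmem hdist
        simpa [Real.dist_eq] using this
      rw [abs_lt] at hgc
      have hterm : g (u : ℝ) (qcast d v) -
          (n : ℝ) * C * (|y - (u : ℝ)| + ‖z - qcast d v‖ ^ α) ≤
          gqsup d C α g n y z := le_ciSup (gq_bdd hC hα0 hα1 hf H5 hn y z) (u, v)
      have hnC : (0 : ℝ) ≤ (n : ℝ) * C := by positivity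
      have hue : |y - (u : ℝ)| < e := hu
      have hve : ‖z - qcast d v‖ ^ α < e := hvα
      have hee : 2 * ((n : ℝ) * C) * e ≤ ε / 2 := by
        have h4 : e ≤ ε / (4 * ((n : ℝ) * C) + 1) := min_le_right _ _
        have h5 : 2 * ((n : ℝ) * C) * e ≤ 2 * ((n : ℝ) * C) * (ε / (4 * ((n : ℝ) * C) + 1)) :=
          mul_le_mul_of_nonneg_left h4 (by positivity)
        have h6 : 2 * ((n : ℝ) * C) * (ε / (4 * ((n : ℝ) * C) + 1)) ≤ ε / 2 := by
          have h7 : (4 * ((n : ℝ) * C)) / (4 * ((n : ℝ) * C) + 1) ≤ 1 := by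
            rw [div_le_one (by positivity)]; linarith
          have heq : 2 * ((n : ℝ) * C) * (ε / (4 * ((n : ℝ) * C) + 1)) =
              (4 * ((n : ℝ) * C)) / (4 * ((n : ℝ) * C) + 1) * (ε / 2) := by ring
          rw [heq]
          exact mul_le_of_le_one_left (by linarith) h7
        linarith
      linarith [mul_le_mul_of_nonneg_left (add_le_add hue.le hve.le) hnC, hgc.1, hterm]
    refine ⟨hc1, ?_⟩
    intro yseq zseq y₀ z₀ hy hyt hzt
    -- limit of g along the sequence
    have hmemseq : Tendsto (fun n => ((yseq n, zseq n) : ℝ × EuclideanSpace ℝ (Fin d))) atTop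
        (𝓝[{p : ℝ × EuclideanSpace ℝ (Fin d) | y₀ ≤ p.1}] (y₀, z₀)) := by
      rw [tendsto_nhdsWithin_iff]
      exact ⟨hyt.prodMk_nhds hzt, Filter.Eventually.of_forall fun n => hy n⟩
    have hgseq : Tendsto (fun n => g (yseq n) (zseq n)) atTop (𝓝 (g y₀ z₀)) :=
      (H1 y₀ z₀).comp hmemseq
    -- bound sequence M n
    set M : ℕ → ℝ := fun n => f + C * (|yseq n| + ‖zseq n‖ ^ α) with hMdef
    set M₀ : ℝ := f + C * (|y₀| + ‖z₀‖ ^ α) with hM₀def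
    have hM : Tendsto M atTop (𝓝 M₀) := by
      have h1 : Tendsto (fun n => |yseq n|) atTop (𝓝 |y₀|) := hyt.abs
      have h2 : Tendsto (fun n => ‖zseq n‖ ^ α) atTop (𝓝 (‖z₀‖ ^ α)) :=
        ((continuous_norm.tendsto z₀).comp hzt).rpow_const (Or.inr hα0.le)
      exact tendsto_const_nhds.add ((h1.add h2).const_mul C)
    have hM₀0 : 0 ≤ M₀ := by rw [hM₀def]; positivity
    clear_value M M₀
    -- near-optimal choices
    have hchoice : ∀ n : ℕ, ∃ p : ℚ × (Fin d → ℚ),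
        gqsup d C α g n (yseq n) (zseq n) - 1/((n : ℝ)+1) <
          g (p.1 : ℝ) (qcast d p.2) -
            (n : ℝ) * C * (|yseq n - (p.1 : ℝ)| + ‖zseq n - qcast d p.2‖ ^ α) := by
      intro n
      apply exists_lt_of_lt_ciSup
      exact sub_lt_self _ (by positivity)
    choose P hP using hchoice
    rw [tendsto_order]
    constructor
    · -- lower bound
      intro a ha
      filter_upwards [hgseq.eventually (eventually_gt_nhds ha), eventually_ge_atTop 1]
        with n h1 h2
      exact h1.trans_le (hc1 n h2 _ _)
    · -- upper bound
      intro a ha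
      set ε := (a - g y₀ z₀) / 2 with hεdef
      have hε : 0 < ε := by simp [hεdef]; linarith
      -- local upper bound for g around (y₀, z₀)
      obtain ⟨δ, hδ0, hδ⟩ : ∃ δ > 0, ∀ (u : ℝ) (v : EuclideanSpace ℝ (Fin d)),
          dist ((u, v) : ℝ × EuclideanSpace ℝ (Fin d)) (y₀, z₀) < δ →
            g u v < g y₀ z₀ + ε := by
        obtain ⟨δ₁, hδ₁0, hδ₁⟩ := Metric.tendsto_nhdsWithin_nhds.1 (H1 y₀ z₀) ε hε
        have hbound : IsBoundedUnder (· ≤ ·)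
            (𝓝[{p : ℝ × EuclideanSpace ℝ (Fin d) | p.1 ≤ y₀}] (y₀, z₀))
            (fun p : ℝ × EuclideanSpace ℝ (Fin d) => g p.1 p.2) := by
          apply Filter.isBoundedUnder_of_eventually_le
            (a := f + C * ((|y₀| + 1) + (‖z₀‖ + 1) ^ α))
          have hball : ∀ᶠ p in (𝓝[{p : ℝ × EuclideanSpace ℝ (Fin d) | p.1 ≤ y₀}] (y₀, z₀)),
              dist p (y₀, z₀) < 1 :=
            eventually_nhdsWithin_of_eventually_nhds
              (Metric.eventually_nhds_iff_ball.2 ⟨1, one_pos, fun p hp => Metric.mem_ball.1 hp⟩)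
          filter_upwards [hball] with p hp
          rw [Prod.dist_eq, max_lt_iff] at hp
          have h1 : |p.1 - y₀| < 1 := by rw [← Real.dist_eq]; exact hp.1
          have h2 : ‖p.2 - z₀‖ < 1 := by rw [← dist_eq_norm]; exact hp.2
          have h3 : |p.1| ≤ |y₀| + 1 := by
            have := abs_sub_abs_le_abs_sub p.1 y₀; linarith
          have h4 : ‖p.2‖ ^ α ≤ (‖z₀‖ + 1) ^ α := by
            apply Real.rpow_le_rpow (norm_nonneg _) _ hα0.le
            have := norm_sub_norm_le p.2 z₀; linarith
          have h5 := (abs_le.1 (H5 p.1 p.2)).2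
          have := mul_le_mul_of_nonneg_left (add_le_add h3 h4) hC.le
          linarith
        have h2lt : Filter.limsup (fun p : ℝ × EuclideanSpace ℝ (Fin d) => g p.1 p.2)
            (𝓝[{p : ℝ × EuclideanSpace ℝ (Fin d) | p.1 ≤ y₀}] (y₀, z₀)) < g y₀ z₀ + ε :=
          (H2 y₀ z₀).trans_lt (lt_add_of_pos_right _ hε)
        have hev := eventually_lt_of_limsup_lt h2lt hbound
        obtain ⟨δ₂, hδ₂0, hδ₂⟩ := Metric.mem_nhdsWithin_iff.1 hev
        refine ⟨min δ₁ δ₂, lt_min hδ₁0 hδ₂0, fun u v hd => ?_⟩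
        rcases le_total y₀ u with hcase | hcase
        · have := hδ₁ (show ((u,v) : ℝ × EuclideanSpace ℝ (Fin d)) ∈
              {p : ℝ × EuclideanSpace ℝ (Fin d) | y₀ ≤ p.1} from hcase)
            (hd.trans_le (min_le_left _ _))
          rw [Real.dist_eq, abs_lt] at this
          linarith [this.2]
        · exact hδ₂ ⟨Metric.mem_ball.2 (hd.trans_le (min_le_right _ _)), hcase⟩
      -- the threshold for D n
      set c := min (δ/2) ((δ/2) ^ α) with hcdef
      have hc0 : 0 < c := lt_min (by linarith) (Real.rpow_pos_of_pos (by linarith) _)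
      clear_value c
      set K := 2 * (M₀ + 1) + 1 with hKdef
      have hK0 : 0 < K := by rw [hKdef]; linarith
      clear_value K
      obtain ⟨N₀, hN₀⟩ := exists_nat_gt (K / (c * C) + 1)
      -- eventual facts
      have E1 : ∀ᶠ n in atTop, M n ≤ M₀ + 1 :=
        hM.eventually (eventually_le_nhds (lt_add_one M₀))
      have E2 : ∀ᶠ n in atTop, |yseq n - y₀| < δ/2 := by
        have := Metric.tendsto_atTop.1 hyt (δ/2) (by linarith)
        obtain ⟨N, hN⟩ := this
        exact eventually_atTop.2 ⟨N, fun n hn => by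
          have := hN n hn; rwa [Real.dist_eq] at this⟩
      have E3 : ∀ᶠ n in atTop, ‖zseq n - z₀‖ < δ/2 := by
        obtain ⟨N, hN⟩ := Metric.tendsto_atTop.1 hzt (δ/2) (by linarith)
        exact eventually_atTop.2 ⟨N, fun n hn => by
          have := hN n hn; rwa [dist_eq_norm] at this⟩
      have E4 : ∀ᶠ n : ℕ in atTop, 1/((n : ℝ)+1) < ε := by
        have ht : Tendsto (fun n : ℕ => 1/((n : ℝ)+1)) atTop (𝓝 0) :=
          tendsto_one_div_add_atTop_nhds_zero_nat
        exact ht.eventually (eventually_lt_nhds hε)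
      have E5 : ∀ᶠ n : ℕ in atTop, N₀ ≤ n := eventually_ge_atTop N₀
      have E6 : ∀ᶠ n : ℕ in atTop, 1 ≤ n := eventually_ge_atTop 1
      filter_upwards [E1, E2, E3, E4, E5, E6] with n h1 h2 h3 h4 h5 h6
      set u : ℝ := ((P n).1 : ℝ) with hudef
      set w : EuclideanSpace ℝ (Fin d) := qcast d (P n).2 with hwdef
      set Dn := |yseq n - u| + ‖zseq n - w‖ ^ α with hDdef
      have hD0 : 0 ≤ Dn := by positivity
      have hPn : gqsup d C α g n (yseq n) (zseq n) - 1/((n : ℝ)+1) < g u w - (n : ℝ) * C * Dn :=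
        hP n
      clear_value u w Dn
      have hgl : g (yseq n) (zseq n) ≤ gqsup d C α g n (yseq n) (zseq n) := hc1 n h6 _ _
      have hMl : -(M n) ≤ g (yseq n) (zseq n) := by
        simp only [hMdef]
        exact (abs_le.1 (H5 _ _)).1
      have hub : g u w ≤ M n + C * Dn := by
        have := g_ub hC hα0 hα1 hf H5 (yseq n) u (zseq n) w
        simp only [hMdef, hDdef]
        linarith
      have hone : 1/((n : ℝ)+1) ≤ 1 := by
        rw [div_le_one (by positivity)]
        have : (0:ℝ) ≤ (n : ℝ) := Nat.cast_nonneg n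
        linarith
      have hK2 : 2 * (M n) + 1/((n : ℝ)+1) ≤ K := by rw [hKdef]; linarith
      have h7 : ((n : ℝ) - 1) * (C * Dn) < K := by
        have hexp : ((n : ℝ) - 1) * (C * Dn) = (n : ℝ) * C * Dn - C * Dn := by ring
        rw [hexp]
        linarith [hPn, hgl, hMl, hub]
      have hn1 : (K / (c*C) + 1) < (n : ℝ) := by
        have : (N₀ : ℝ) ≤ (n : ℝ) := Nat.cast_le.2 h5
        linarith
      have hcC : 0 < c * C := by positivity
      have h8 : K < ((n : ℝ) - 1) * (c * C) := by
        have h9 : K / (c*C) < (n : ℝ) - 1 := by linarith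
        calc K = (K / (c*C)) * (c*C) := by field_simp
          _ < ((n : ℝ) - 1) * (c*C) := by
              exact mul_lt_mul_of_pos_right h9 hcC
      have hn0 : (0 : ℝ) < (n : ℝ) - 1 := by
        have : (0:ℝ) < K / (c*C) := div_pos hK0 hcC
        linarith
      have h9 : C * Dn < c * C := lt_of_mul_lt_mul_left (h7.trans h8) hn0.le
      have hDc : Dn < c := by
        have : C * Dn < C * c := by linarith [h9]; 
        exact (mul_lt_mul_iff_right₀ hC).1 this
      -- components of Dn
      have hay : |yseq n - u| < c := by
        have : 0 ≤ ‖zseq n - w‖ ^ α := by positivity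
        rw [hDdef] at hDc; linarith
      have hbz : ‖zseq n - w‖ < δ/2 := by
        by_contra hcon
        push_neg at hcon
        have := Real.rpow_le_rpow (by linarith : (0:ℝ) ≤ δ/2) hcon hα0.le
        have h10 : ‖zseq n - w‖ ^ α < c := by
          have : 0 ≤ |yseq n - u| := abs_nonneg _
          rw [hDdef] at hDc; linarith
        have h11 : c ≤ (δ/2) ^ α := by rw [hcdef]; exact min_le_right _ _
        linarith
      have hdistuw : dist ((u, w) : ℝ × EuclideanSpace ℝ (Fin d)) (y₀, z₀) < δ := by
        rw [Prod.dist_eq, max_lt_iff]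
        constructor
        · rw [Real.dist_eq]
          have hc2 : c ≤ δ/2 := by rw [hcdef]; exact min_le_left _ _
          have h := abs_sub_le u (yseq n) y₀
          rw [abs_sub_comm u (yseq n)] at h
          linarith
        · rw [dist_eq_norm]
          have h := norm_sub_le_norm_sub_add_norm_sub w (zseq n) z₀
          rw [norm_sub_rev w (zseq n)] at h
          linarith
      have hguw : g u w < g y₀ z₀ + ε := hδ u w hdistuw
      have hnCD : 0 ≤ (n : ℝ) * C * Dn := by positivity
      have : gqsup d C α g n (yseq n) (zseq n) < g y₀ z₀ + ε + ε := by linarith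
      have hfin : g y₀ z₀ + ε + ε = a := by rw [hεdef]; ring
      linarith
end
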